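/- arXiv:2509.19702 — 3 statements merged into one kernel-verified Lean document; each statement's English description precedes it below -/
import Mathlib

section
/- Let μ_ℓ, ν_ℓ be two eigenvalue sequences evolving as μ_{ℓ+1} = (1 - η_ℓ μ_ℓ)^2 μ_ℓ and ν_{ℓ+1} = (1 - η_ℓ ν_ℓ)^2 ν_ℓ, with 0 < ν_0 ≤ μ_0 and η_ℓ ≤ 1/(3 μ_ℓ) for all ℓ (where μ_ℓ is the larger). Then for all ℓ, both sequences remain nonnegative and μ_ℓ ≥ ν_ℓ, i.e., the ordering of eigenvalues is preserved under the iteration. -/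
/-- Eigenvalue ordering is preserved by the scalar EAGLE dynamics: if
`μ_{ℓ+1} = (1 - η_ℓ μ_ℓ)² μ_ℓ`, `ν_{ℓ+1} = (1 - η_ℓ ν_ℓ)² ν_ℓ`, with
`0 < ν₀ ≤ μ₀` and `η_ℓ ≤ 1/(3 μ_ℓ)` for all `ℓ`, then both sequences
stay nonnegative and `ν_ℓ ≤ μ_ℓ` for all `ℓ`. -/
theorem eagle_eigenvalue_order_preserved
    (μ ν η : ℕ → ℝ)
    (hμ : ∀ ℓ, μ (ℓ + 1) = (1 - η ℓ * μ ℓ) ^ 2 * μ ℓ)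
    (hν : ∀ ℓ, ν (ℓ + 1) = (1 - η ℓ * ν ℓ) ^ 2 * ν ℓ)
    (hν0 : 0 < ν 0) (h0 : ν 0 ≤ μ 0)
    (hη : ∀ ℓ, η ℓ ≤ 1 / (3 * μ ℓ)) :
    ∀ ℓ, 0 ≤ ν ℓ ∧ 0 ≤ μ ℓ ∧ ν ℓ ≤ μ ℓ := by
  intro ℓ
  induction ℓ with
  | zero => exact ⟨hν0.le, hν0.le.trans h0, h0⟩
  | succ n ih =>
    obtain ⟨hn, hm, hnm⟩ := ih
    have hn1 : 0 ≤ ν (n + 1) := by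
      rw [hν]; exact mul_nonneg (sq_nonneg _) hn
    have hm1 : 0 ≤ μ (n + 1) := by
      rw [hμ]; exact mul_nonneg (sq_nonneg _) hm
    refine ⟨hn1, hm1, ?_⟩
    rw [hμ, hν]
    rcases eq_or_lt_of_le hm with hz | hpos
    · have hνz : ν n = 0 := le_antisymm (hnm.trans hz.symm.le) hn
      rw [← hz, hνz]
    · have hηm : η n * μ n ≤ 1 / 3 := by
        have h := (le_div_iff₀ (by linarith : (0:ℝ) < 3 * μ n)).mp (hη n)
        nlinarith
      have hb : 0 ≤ 1 - 2 * η n * (μ n + ν n) + η n ^ 2 * (μ n ^ 2 + ν n ^ 2 + μ n * ν n) := by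
        rcases le_or_gt (η n) 0 with h | h
        · nlinarith [sq_nonneg (η n * (μ n - ν n)), mul_nonneg (mul_nonneg (mul_nonneg (neg_nonneg.2 h) hn) (neg_nonneg.2 h)) hm]
        · have hην : η n * ν n ≤ 1 / 3 := by nlinarith [mul_le_mul_of_nonneg_left hnm h.le]
          have hx : 0 ≤ η n * μ n := mul_nonneg h.le hm
          have hy : 0 ≤ η n * ν n := mul_nonneg h.le hn
          nlinarith [sq_nonneg (1 - η n * μ n - η n * ν n), mul_nonneg hx hy,
            mul_nonneg (mul_nonneg hx hy) hx, mul_nonneg (mul_nonneg hx hy) hy]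
      nlinarith [mul_nonneg (sub_nonneg.2 hnm) hb]
end

section
/- Let λ̄ ≥ λ̲ > 0 with condition ratio κ = λ̄/λ̲ and θ = κ - 1. Under the update λ̄_+ = (1 - ηλ̄)^2 λ̄ and λ̲_+ = (1 - ηλ̲)^2 λ̲ with step η satisfying ηλ̄ ≤ 1/3, the new gap θ_+ = λ̄_+/λ̲_+ - 1 satisfies θ_+ ≤ θ · exp(-5ηλ̄/3). -/
/-- Geometric contraction of the condition-number excess. Let `λ̄ ≥ λ̲ > 0`,
`θ = λ̄/λ̲ - 1`. Under the updates `λ̄₊ = (1 - ηλ̄)² λ̄`, `λ̲₊ = (1 - ηλ̲)² λ̲`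
with step `0 ≤ η` and `η λ̄ ≤ 1/3`, the new excess
`θ₊ = λ̄₊/λ̲₊ - 1` satisfies `θ₊ ≤ θ · exp(-5ηλ̄/3)`. -/
theorem eagle_geometric_contraction
    (lamHi lamLo η : ℝ)
    (hlo : 0 < lamLo) (hle : lamLo ≤ lamHi)
    (hηnn : 0 ≤ η) (hη : η * lamHi ≤ 1 / 3) :
    ((1 - η * lamHi) ^ 2 * lamHi) / ((1 - η * lamLo) ^ 2 * lamLo) - 1 ≤
      (lamHi / lamLo - 1) * Real.exp (-(5 * η * lamHi) / 3) := by
  have hH : 0 < lamHi := lt_of_lt_of_le hlo hle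
  have hBA : η * lamLo ≤ η * lamHi := mul_le_mul_of_nonneg_left hle hηnn
  have hB0 : 0 ≤ η * lamLo := mul_nonneg hηnn hlo.le
  have hA0 : 0 ≤ η * lamHi := hB0.trans hBA
  have hB3 : η * lamLo ≤ 1 / 3 := hBA.trans hη
  have h1B : (0:ℝ) < 1 - η * lamLo := by linarith
  have hD : 0 < (1 - η * lamLo) ^ 2 * lamLo := by positivity
  have poly : (1 - η * lamHi) ^ 2 * lamHi - (1 - η * lamLo) ^ 2 * lamLo ≤
      (lamHi - lamLo) * (1 - 5 * (η * lamHi) / 3) * (1 - η * lamLo) ^ 2 := by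
    nlinarith [mul_nonneg (mul_nonneg (sub_nonneg.2 hle) hA0)
        (by linarith : (0:ℝ) ≤ 1 / 3 - η * lamHi),
      mul_nonneg (mul_nonneg (mul_nonneg (sub_nonneg.2 hle) hA0) hB0)
        (by linarith : (0:ℝ) ≤ 7 - 5 * (η * lamLo))]
  have hκ : lamHi / lamLo - 1 = (lamHi - lamLo) / lamLo := by
    field_simp
  have main : ((1 - η * lamHi) ^ 2 * lamHi) / ((1 - η * lamLo) ^ 2 * lamLo) - 1 ≤
      (lamHi / lamLo - 1) * (1 - 5 * (η * lamHi) / 3) := by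
    rw [hκ, div_sub_one hD.ne', div_le_iff₀ hD]
    have heq : (lamHi - lamLo) / lamLo * (1 - 5 * (η * lamHi) / 3) *
        ((1 - η * lamLo) ^ 2 * lamLo) =
        (lamHi - lamLo) * (1 - 5 * (η * lamHi) / 3) * (1 - η * lamLo) ^ 2 := by
      field_simp
    rw [heq]
    exact poly
  have hexp : 1 - 5 * (η * lamHi) / 3 ≤ Real.exp (-(5 * η * lamHi) / 3) := by
    have := Real.add_one_le_exp (-(5 * η * lamHi) / 3)
    linarith
  have hθ : 0 ≤ lamHi / lamLo - 1 := by
    rw [sub_nonneg, le_div_iff₀ hlo]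
    linarith
  calc ((1 - η * lamHi) ^ 2 * lamHi) / ((1 - η * lamLo) ^ 2 * lamLo) - 1
      ≤ (lamHi / lamLo - 1) * (1 - 5 * (η * lamHi) / 3) := main
    _ ≤ (lamHi / lamLo - 1) * Real.exp (-(5 * η * lamHi) / 3) :=
        mul_le_mul_of_nonneg_left hexp hθ
end

section
/- In the noiseless distributed setting where [B D] = W_* [A C], the distributed EAGLE iterate satisfies D_ℓ = W_*(I - N_ℓ) C_0 with N_ℓ^⊤ = ∏_{l<ℓ}(I - γ_l Ē_l) and Ē_l = M^{-1}∑_μ E_l^μ, provided the invariant V_l^μ = W_* E_l^μ holds on every machine for all l. -/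
open Matrix Finset

/-- Telescoping the distributed EAGLE iterate: in the noiseless setting, where
the invariant `V_l^μ = W⋆ E_l^μ` holds on every machine for all `l`, and with
`D₀ = 0`, `D_{ℓ+1} = D_ℓ + (γ_ℓ/M) ∑_μ V_ℓ^μ C_ℓ`,
`C_{ℓ+1} = C_ℓ - (γ_ℓ/M) ∑_μ E_ℓ^μ C_ℓ`, the iterates satisfy
`D_ℓ = W⋆ (I - N_ℓ) C₀`, with `Nᵀ_ℓ = ∏_{l<ℓ}(I - γ_l Ē_l)` and
`Ē_l = M⁻¹ ∑_μ E_l^μ`. -/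
theorem distributed_eagle_telescoped_prediction
    {d d' M : ℕ}
    (E : ℕ → Fin M → Matrix (Fin d) (Fin d) ℝ)
    (V : ℕ → Fin M → Matrix (Fin d') (Fin d) ℝ)
    (γ : ℕ → ℝ)
    (C : ℕ → Matrix (Fin d) (Fin d') ℝ)
    (D : ℕ → Matrix (Fin d') (Fin d') ℝ)
    (W : Matrix (Fin d') (Fin d) ℝ)
    (N : ℕ → Matrix (Fin d) (Fin d) ℝ)
    (hEsymm : ∀ l μ, (E l μ).IsSymm)
    (hEbarcomm : ∀ l l',
      Commute ((M : ℝ)⁻¹ • ∑ μ, E l μ) ((M : ℝ)⁻¹ • ∑ μ, E l' μ))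
    (hD0 : D 0 = 0)
    (hC : ∀ ℓ, C (ℓ + 1) = C ℓ - (γ ℓ / M) • ((∑ μ, E ℓ μ) * C ℓ))
    (hD : ∀ ℓ, D (ℓ + 1) = D ℓ + (γ ℓ / M) • ((∑ μ, V ℓ μ) * C ℓ))
    (hinv : ∀ l μ, V l μ = W * E l μ)
    (hN0 : N 0 = 1)
    (hN : ∀ ℓ, (N (ℓ + 1))ᵀ = (N ℓ)ᵀ * (1 - γ ℓ • ((M : ℝ)⁻¹ • ∑ μ, E ℓ μ))) :
    ∀ ℓ, D ℓ = W * (1 - N ℓ) * C 0 := by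
  have hEbar : ∀ l, (∑ μ, E l μ)ᵀ = ∑ μ, E l μ := by
    intro l
    rw [Matrix.transpose_sum]
    exact Finset.sum_congr rfl fun μ _ => hEsymm l μ
  have hNstep : ∀ ℓ, N (ℓ + 1) = (1 - γ ℓ • ((M : ℝ)⁻¹ • ∑ μ, E ℓ μ)) * N ℓ := by
    intro ℓ
    have h := congrArg Matrix.transpose (hN ℓ)
    simpa [Matrix.transpose_mul, Matrix.transpose_sub, Matrix.transpose_smul,
      hEbar ℓ] using h
  have key : ∀ ℓ, C ℓ = N ℓ * C 0 ∧ D ℓ = W * (1 - N ℓ) * C 0 := by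
    intro ℓ
    induction ℓ with
    | zero => simp [hN0, hD0]
    | succ n ih =>
      obtain ⟨hCn, hDn⟩ := ih
      have hscal : (γ n / (M : ℝ)) • ((∑ μ, E n μ) * C n)
          = (γ n • ((M : ℝ)⁻¹ • ∑ μ, E n μ)) * C n := by
        rw [Matrix.smul_mul, Matrix.smul_mul, smul_smul, div_eq_mul_inv]
      refine ⟨?_, ?_⟩
      · rw [hC n, hNstep n, hscal, hCn]
        simp only [Matrix.sub_mul, Matrix.one_mul, Matrix.mul_assoc]
      · have hV : (∑ μ, V n μ) = W * ∑ μ, E n μ := by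
          rw [Matrix.mul_sum]
          exact Finset.sum_congr rfl fun μ _ => hinv n μ
        rw [hD n, hDn, hNstep n, hV, hCn]
        have h2 : (γ n / (M : ℝ)) • ((W * ∑ μ, E n μ) * (N n * C 0))
            = W * ((γ n • ((M : ℝ)⁻¹ • ∑ μ, E n μ)) * (N n * C 0)) := by
          rw [Matrix.smul_mul, Matrix.smul_mul, Matrix.mul_smul, Matrix.mul_smul,
            smul_smul, div_eq_mul_inv, Matrix.mul_assoc]
        rw [h2]
        simp only [Matrix.mul_sub, Matrix.sub_mul, Matrix.one_mul, Matrix.mul_one,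
          Matrix.mul_assoc]
        abel
  exact fun ℓ => (key ℓ).2
end
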